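/- For any square-integrable random vectors X and Y in ℝ^d with laws ν^X and ν^Y, the covariance matrices satisfy ‖C_{X,X} − C_{Y,Y}‖_F ≤ 2 D₂(ν^X,ν^Y)² + 2 D₂(ν^X,ν^Y) (Tr(C_{Y,Y}))^{1/2}. -/

import Mathlib

open MeasureTheory ProbabilityTheory Matrix
open scoped ENNReal NNReal

noncomputable section

/-- Frobenius norm of a real matrix. -/
def frob {d : ℕ} (M : Matrix (Fin d) (Fin d) ℝ) : ℝ := Real.sqrt (∑ i, ∑ j, (M i j)^2)

/-- Cross-covariance matrix of two random vectors. -/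
def covM {d : ℕ} {Ω : Type*} [MeasurableSpace Ω] (P : Measure Ω)
    (X Y : Ω → EuclideanSpace ℝ (Fin d)) : Matrix (Fin d) (Fin d) ℝ :=
  Matrix.of fun i j =>
    ∫ ω, (X ω i - ∫ ω', X ω' i ∂P) * (Y ω j - ∫ ω', Y ω' j ∂P) ∂P

/-- Squared 2-Wasserstein distance (real-valued, via couplings with integrable cost). -/
def wass2sq {d : ℕ} (μ ν : Measure (EuclideanSpace ℝ (Fin d))) : ℝ :=
  sInf {r | ∃ P : Measure (EuclideanSpace ℝ (Fin d) × EuclideanSpace ℝ (Fin d)),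
    P.fst = μ ∧ P.snd = ν ∧ Integrable (fun p => ‖p.1 - p.2‖^2) P ∧
    r = ∫ p, ‖p.1 - p.2‖^2 ∂P}

/-- 2-Wasserstein distance. -/
def wassDist {d : ℕ} (μ ν : Measure (EuclideanSpace ℝ (Fin d))) : ℝ :=
  Real.sqrt (wass2sq μ ν)

/-!
Put `D = X - Y`. Bilinearity of the covariance gives `C_XX - C_YY = C_DD + C_DY + C_YD`, and
entrywise Cauchy–Schwarz bounds the Frobenius norm of a cross-covariance `C_UV` by
`√(Tr C_UU) √(Tr C_VV)`, so `‖C_XX - C_YY‖_F ≤ Tr C_DD + 2 √(Tr C_DD) √(Tr C_YY)`, while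
`Tr C_DD ≤ E‖X - Y‖²`. Covariances only depend on laws, so the same bound holds with
`E‖X - Y‖²` replaced by the transport cost of any coupling of the two laws; since the right-hand
side is continuous and monotone in that cost, it passes to the infimum `D₂²`.
-/

lemma covariance_sq_le_variance_mul_variance {Ω : Type*} [MeasurableSpace Ω] {μ : Measure Ω}
    [IsFiniteMeasure μ] {X Y : Ω → ℝ} (hX : MemLp X 2 μ) (hY : MemLp Y 2 μ) :
    cov[X, Y; μ] ^ 2 ≤ Var[X; μ] * Var[Y; μ] := by
  have hquad (t : ℝ) : 0 ≤ Var[X; μ] * (t * t) + 2 * cov[X, Y; μ] * t + Var[Y; μ] := by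
    have h := variance_nonneg (t • X + Y) μ
    rw [variance_add (hX.const_smul t) hY, variance_smul, covariance_smul_left] at h
    linarith
  have := discrim_le_zero hquad
  rw [discrim] at this
  linarith

section Frobenius

attribute [local instance] Matrix.frobeniusNormedAddCommGroup

lemma frob_eq_norm {d : ℕ} (M : Matrix (Fin d) (Fin d) ℝ) : frob M = ‖M‖ := by
  simp [frob, Matrix.frobenius_norm_def, Real.sqrt_eq_rpow]

lemma frob_add_le {d : ℕ} (A B : Matrix (Fin d) (Fin d) ℝ) :
    frob (A + B) ≤ frob A + frob B := by
  simpa only [frob_eq_norm] using norm_add_le A B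

end Frobenius

section CovarianceMatrix

variable {d : ℕ} {Ω : Type*} [MeasurableSpace Ω] {μ : Measure Ω}
  {X Y Z : Ω → EuclideanSpace ℝ (Fin d)}

lemma covM_apply (X Y : Ω → EuclideanSpace ℝ (Fin d)) (i j : Fin d) :
    covM μ X Y i j = cov[fun ω ↦ X ω i, fun ω ↦ Y ω j; μ] := rfl

lemma covM_sub_left [IsFiniteMeasure μ] (hX : MemLp X 2 μ) (hY : MemLp Y 2 μ)
    (hZ : MemLp Z 2 μ) : covM μ (X - Y) Z = covM μ X Z - covM μ Y Z := by
  ext i j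
  simp only [Matrix.sub_apply, covM_apply]
  exact covariance_sub_left (hX.eval_piLp i) (hY.eval_piLp i) (hZ.eval_piLp j)

lemma covM_sub_right [IsFiniteMeasure μ] (hX : MemLp X 2 μ) (hY : MemLp Y 2 μ)
    (hZ : MemLp Z 2 μ) : covM μ X (Y - Z) = covM μ X Y - covM μ X Z := by
  ext i j
  simp only [Matrix.sub_apply, covM_apply]
  exact covariance_sub_right (hX.eval_piLp i) (hY.eval_piLp j) (hZ.eval_piLp j)

lemma covM_sub_covM [IsFiniteMeasure μ] (hX : MemLp X 2 μ) (hY : MemLp Y 2 μ) :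
    covM μ X X - covM μ Y Y
      = covM μ (X - Y) (X - Y) + covM μ (X - Y) Y + covM μ Y (X - Y) := by
  rw [covM_sub_left hX hY (hX.sub hY), covM_sub_right hX hX hY, covM_sub_right hY hX hY,
    covM_sub_left hX hY hY]
  abel

lemma trace_covM (hX : AEMeasurable X μ) :
    (covM μ X X).trace = ∑ i, Var[fun ω ↦ X ω i; μ] :=
  Finset.sum_congr rfl fun i _ ↦ covariance_self (by fun_prop)

lemma trace_covM_nonneg (hX : AEMeasurable X μ) : 0 ≤ (covM μ X X).trace := by
  rw [trace_covM hX]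
  exact Finset.sum_nonneg fun i _ ↦ variance_nonneg _ _

lemma trace_covM_le_integral_norm_sq [IsProbabilityMeasure μ] (hX : MemLp X 2 μ) :
    (covM μ X X).trace ≤ ∫ ω, ‖X ω‖ ^ 2 ∂μ := by
  have hsq (i : Fin d) : Integrable (fun ω ↦ X ω i ^ 2) μ := (hX.eval_piLp i).integrable_sq
  calc (covM μ X X).trace = ∑ i, Var[fun ω ↦ X ω i; μ] := trace_covM hX.aemeasurable
    _ ≤ ∑ i, ∫ ω, X ω i ^ 2 ∂μ := Finset.sum_le_sum fun i _ ↦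
        variance_le_expectation_sq (hX.eval_piLp i).aestronglyMeasurable
    _ = ∫ ω, ‖X ω‖ ^ 2 ∂μ := by
        rw [← integral_finsetSum _ fun i _ ↦ hsq i]
        simp_rw [EuclideanSpace.real_norm_sq_eq]

lemma frob_covM_le [IsFiniteMeasure μ] (hX : MemLp X 2 μ) (hY : MemLp Y 2 μ) :
    frob (covM μ X Y) ≤ √(covM μ X X).trace * √(covM μ Y Y).trace := by
  rw [frob, ← Real.sqrt_mul (trace_covM_nonneg hX.aemeasurable), trace_covM hX.aemeasurable,
    trace_covM hY.aemeasurable, Finset.sum_mul_sum]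
  gcongr with i _ j _
  rw [covM_apply]
  exact covariance_sq_le_variance_mul_variance (hX.eval_piLp i) (hY.eval_piLp j)

lemma frob_covM_sub_covM_le [IsProbabilityMeasure μ] (hX : MemLp X 2 μ) (hY : MemLp Y 2 μ) :
    frob (covM μ X X - covM μ Y Y) ≤
      ∫ ω, ‖X ω - Y ω‖ ^ 2 ∂μ
        + 2 * √(∫ ω, ‖X ω - Y ω‖ ^ 2 ∂μ) * √(covM μ Y Y).trace := by
  have hD := hX.sub hY
  set t := (covM μ (X - Y) (X - Y)).trace
  have ht : t ≤ ∫ ω, ‖X ω - Y ω‖ ^ 2 ∂μ := trace_covM_le_integral_norm_sq hD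
  calc frob (covM μ X X - covM μ Y Y)
      ≤ frob (covM μ (X - Y) (X - Y)) + frob (covM μ (X - Y) Y) + frob (covM μ Y (X - Y)) := by
        rw [covM_sub_covM hX hY]
        exact (frob_add_le _ _).trans (add_le_add_left (frob_add_le _ _) _)
    _ ≤ √t * √t + √t * √(covM μ Y Y).trace + √(covM μ Y Y).trace * √t := by
        gcongr <;> exact frob_covM_le (by assumption) (by assumption)
    _ = t + 2 * √t * √(covM μ Y Y).trace := by
        rw [Real.mul_self_sqrt (trace_covM_nonneg hD.aemeasurable)]
        ring
    _ ≤ _ := by gcongr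

end CovarianceMatrix

section Law

variable {Ω Ω' : Type*} [MeasurableSpace Ω] [MeasurableSpace Ω'] {μ : Measure Ω}
  {ν : Measure Ω'}

lemma MeasureTheory.MemLp.of_map_eq {E : Type*} [NormedAddCommGroup E] [MeasurableSpace E]
    [BorelSpace E] [SecondCountableTopology E] {p : ℝ≥0∞} {X : Ω → E} {Y : Ω' → E}
    (hX : MemLp X p μ) (hY : AEMeasurable Y ν) (h : μ.map X = ν.map Y) : MemLp Y p ν := by
  have hid := (memLp_map_measure_iff aestronglyMeasurable_id hX.aemeasurable).2 hX
  rw [h] at hid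
  exact (memLp_map_measure_iff aestronglyMeasurable_id hY).1 hid

variable {d : ℕ}

lemma covM_map_id {X : Ω → EuclideanSpace ℝ (Fin d)} (hX : AEMeasurable X μ) :
    covM (μ.map X) id id = covM μ X X := by
  ext i j
  exact covariance_map (by fun_prop) (by fun_prop) hX

lemma covM_eq_of_map_eq {X : Ω → EuclideanSpace ℝ (Fin d)} {Y : Ω' → EuclideanSpace ℝ (Fin d)}
    (hX : AEMeasurable X μ) (hY : AEMeasurable Y ν) (h : μ.map X = ν.map Y) :
    covM μ X X = covM ν Y Y := by
  rw [← covM_map_id hX, h, covM_map_id hY]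

end Law

section Wasserstein

variable {d : ℕ}

lemma wass2sq_nonneg {μ ν : Measure (EuclideanSpace ℝ (Fin d))} : 0 ≤ wass2sq μ ν :=
  Real.sInf_nonneg <| by rintro _ ⟨Q, -, -, -, rfl⟩; positivity

lemma le_apply_wass2sq_of_forall_coupling {μ ν : Measure (EuclideanSpace ℝ (Fin d))} {φ : ℝ → ℝ}
    (hφ : Monotone φ) (hφc : Continuous φ) {a : ℝ}
    (hne : ∃ Q : Measure (EuclideanSpace ℝ (Fin d) × EuclideanSpace ℝ (Fin d)),
      Q.fst = μ ∧ Q.snd = ν ∧ Integrable (fun p ↦ ‖p.1 - p.2‖ ^ 2) Q)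
    (h : ∀ Q : Measure (EuclideanSpace ℝ (Fin d) × EuclideanSpace ℝ (Fin d)),
      Q.fst = μ → Q.snd = ν → Integrable (fun p ↦ ‖p.1 - p.2‖ ^ 2) Q →
        a ≤ φ (∫ p, ‖p.1 - p.2‖ ^ 2 ∂Q)) :
    a ≤ φ (wass2sq μ ν) := by
  obtain ⟨Q₀, hQ₀μ, hQ₀ν, hQ₀⟩ := hne
  unfold wass2sq
  refine le_of_le_of_eq ?_ (hφ.map_csInf_of_continuousAt hφc.continuousAt ?nonempty ?bdd).symm
  case nonempty => exact ⟨_, Q₀, hQ₀μ, hQ₀ν, hQ₀, rfl⟩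
  case bdd => exact ⟨0, by rintro _ ⟨Q, -, -, -, rfl⟩; positivity⟩
  refine le_csInf (Set.Nonempty.image _ ⟨_, Q₀, hQ₀μ, hQ₀ν, hQ₀, rfl⟩) ?_
  rintro _ ⟨_, ⟨Q, hQμ, hQν, hQ, rfl⟩, rfl⟩
  exact h Q hQμ hQν hQ

variable {Ω : Type*} [MeasurableSpace Ω] {P : Measure Ω} {X Y : Ω → EuclideanSpace ℝ (Fin d)}

lemma exists_coupling_of_memLp_two (hX : MemLp X 2 P) (hY : MemLp Y 2 P) :
    ∃ Q : Measure (EuclideanSpace ℝ (Fin d) × EuclideanSpace ℝ (Fin d)),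
      Q.fst = P.map X ∧ Q.snd = P.map Y ∧ Integrable (fun p ↦ ‖p.1 - p.2‖ ^ 2) Q := by
  refine ⟨P.map fun ω ↦ (X ω, Y ω), Measure.fst_map_prodMk₀ hY.aemeasurable,
    Measure.snd_map_prodMk₀ hX.aemeasurable, ?_⟩
  rw [integrable_map_measure (by fun_prop) (hX.aemeasurable.prodMk hY.aemeasurable)]
  exact (hX.sub hY).integrable_norm_pow two_ne_zero

lemma frob_covM_sub_covM_le_of_coupling [IsProbabilityMeasure P] (hX : MemLp X 2 P)
    (hY : MemLp Y 2 P) {Q : Measure (EuclideanSpace ℝ (Fin d) × EuclideanSpace ℝ (Fin d))}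
    (hQX : Q.fst = P.map X) (hQY : Q.snd = P.map Y) :
    frob (covM P X X - covM P Y Y) ≤
      ∫ p, ‖p.1 - p.2‖ ^ 2 ∂Q + 2 * √(∫ p, ‖p.1 - p.2‖ ^ 2 ∂Q) * √(covM P Y Y).trace := by
  have : IsProbabilityMeasure (Q.map Prod.fst) := by
    rw [← Measure.fst, hQX]
    exact Measure.isProbabilityMeasure_map hX.aemeasurable
  have : IsProbabilityMeasure Q := Measure.isProbabilityMeasure_of_map Prod.fst
  rw [covM_eq_of_map_eq hX.aemeasurable measurable_fst.aemeasurable hQX.symm,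
    covM_eq_of_map_eq hY.aemeasurable measurable_snd.aemeasurable hQY.symm]
  exact frob_covM_sub_covM_le (hX.of_map_eq measurable_fst.aemeasurable hQX.symm)
    (hY.of_map_eq measurable_snd.aemeasurable hQY.symm)

end Wasserstein

/-- `‖C_{X,X} − C_{Y,Y}‖_F ≤ 2 D₂(ν^X,ν^Y)² + 2 D₂(ν^X,ν^Y) (Tr C_{Y,Y})^{1/2}`. -/
theorem frob_cov_sub_cov_le_wasserstein {d : ℕ} {Ω : Type*} [MeasurableSpace Ω]
    (P : Measure Ω) [IsProbabilityMeasure P]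
    (X Y : Ω → EuclideanSpace ℝ (Fin d))
    (hX : MemLp X 2 P) (hY : MemLp Y 2 P) :
    frob (covM P X X - covM P Y Y) ≤
      2 * wassDist (P.map X) (P.map Y)^2
        + 2 * wassDist (P.map X) (P.map Y) * Real.sqrt ((covM P Y Y).trace) := by
  set w := wass2sq (P.map X) (P.map Y)
  set T := (covM P Y Y).trace
  have hw : frob (covM P X X - covM P Y Y) ≤ w + 2 * √w * √T := by
    refine le_apply_wass2sq_of_forall_coupling (φ := fun r ↦ r + 2 * √r * √T) (fun r s hrs ↦ ?_) (by fun_prop)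
      (exists_coupling_of_memLp_two hX hY)
      fun Q hQX hQY _ ↦ frob_covM_sub_covM_le_of_coupling hX hY hQX hQY
    dsimp only
    gcongr
  rw [wassDist, Real.sq_sqrt wass2sq_nonneg]
  linarith [wass2sq_nonneg (μ := P.map X) (ν := P.map Y)]
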